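/- Global characterization of the Łojasiewicz inequality for convex functions: let φ ∈ 𝒦(0,+∞) and c > 0. (i) If φ′(f(x))·‖∂⁰f(x)‖ ≥ 1 for all x with f(x) > 0, then dist(x, S) ≤ φ(f(x)) for all x with f(x) > 0. (ii) Conversely, if s·φ′(s) ≥ c·φ(s) for all s > 0 (moderate behavior) and φ(f(x)) ≥ dist(x, S) for all x with f(x) > 0, then φ′(f(x))·‖∂⁰f(x)‖ ≥ c for all x with f(x) > 0. (Corollary 3.3.) -/

import Mathlib

/-!
Part (ii) is elementary: a subgradient `u` at `x` gives `f x ≤ ‖u‖ dist(x, S)`, and together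
with the error bound and `s φ'(s) ≥ c φ(s)` this yields `φ'(f x) ‖u‖ ≥ c`.

Part (i) rests on Ekeland's variational principle, applied to `φ ∘ f` on the sublevel set
`[f ≤ f x]` with slope `θ < 1`. It gives a point `y` with `θ dist(x, y) ≤ φ(f x) - φ(f y)` that
no point of lower value improves by more than `θ` times its distance. If `f y > 0`, a short
proximal step `p` from `y` (which exists in a Hilbert space and has the subgradient
`(y - p) / t ∈ ∂f(p)`) contradicts this: concavity of `φ` and the Ekeland property bound
`φ'(f y) ‖(y - p) / t‖` by `θ`, and continuity of `φ'` turns this into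
`φ'(f p) ‖(y - p) / t‖ < 1`, against the hypothesis at `p`. Hence `y ∈ S`, so that
`θ dist(x, S) ≤ φ(f x)` for every `θ < 1`.
-/

open Metric Set Filter
open scoped RealInnerProductSpace

noncomputable section

variable {H : Type*} [NormedAddCommGroup H] [InnerProductSpace ℝ H] [CompleteSpace H]

/-- The convex subdifferential of an extended-real-valued function:
`∂f(x) = {u : f(y) ≥ f(x) + ⟨u, y - x⟩ for all y}`. -/
def subdiff (f : H → EReal) (x : H) : Set H :=
  {u | ∀ y : H, f x + ((⟪u, y - x⟫ : ℝ) : EReal) ≤ f y}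

/-- The set of global minimizers of `f`. -/
def argminSet (f : H → EReal) : Set H := {x | ∀ y, f x ≤ f y}

open Topology

section Ekeland

variable {X : Type*} [MetricSpace X]

theorem exists_forall_mem_of_antitone_of_dist_le [CompleteSpace X] {T : ℕ → Set X} {r : ℕ → ℝ}
    (hT : Antitone T) (hclosed : ∀ n, IsClosed (T n)) (hne : ∀ n, (T n).Nonempty)
    (hdist : ∀ n, ∀ a ∈ T n, ∀ b ∈ T n, dist a b ≤ r n) (hr : Tendsto r atTop (𝓝 0)) :
    ∃ p, ∀ n, p ∈ T n := by
  have hr0 : ∀ n, 0 ≤ r n := fun n =>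
    let ⟨a, ha⟩ := hne n
    (dist_self a).symm.trans_le (hdist n a ha a ha)
  obtain ⟨p, hp⟩ := nonempty_iInter_of_nonempty_biInter hclosed
    (fun n => isBounded_iff.2 ⟨r n, fun a ha b hb => hdist n a ha b hb⟩)
    (fun N => (hne N).mono (subset_iInter₂ fun n hn => hT hn))
    (squeeze_zero (fun n => diam_nonneg)
      (fun n => diam_le_of_forall_dist_le (hr0 n) (hdist n)) hr)
  exact ⟨p, mem_iInter.1 hp⟩

variable {D : Set X} {g : X → ℝ} {δ ε : ℝ} {x y z : X}

def ekelandSet (D : Set X) (g : X → ℝ) (δ : ℝ) (y : X) : Set X :=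
  {z ∈ D | g z + δ * dist z y ≤ g y}

lemma self_mem_ekelandSet (hy : y ∈ D) : y ∈ ekelandSet D g δ y := ⟨hy, by simp⟩

lemma ekelandSet_subset_ekelandSet (hδ : 0 ≤ δ) (hz : z ∈ ekelandSet D g δ y) :
    ekelandSet D g δ z ⊆ ekelandSet D g δ y := by
  intro w hw
  have := mul_le_mul_of_nonneg_left (dist_triangle w z y) hδ
  exact ⟨hw.1, by linarith [hw.2, hz.2]⟩

lemma isClosed_ekelandSet (hD : IsClosed D) (hg : LowerSemicontinuousOn g D) (y : X) :
    IsClosed (ekelandSet D g δ y) := by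
  have hlsc : LowerSemicontinuousOn (fun z => g z + δ * dist z y) D :=
    hg.add <| (by fun_prop : Continuous fun z => δ * dist z y).lowerSemicontinuous
      |>.lowerSemicontinuousOn D
  obtain ⟨v, hv, hDv⟩ := lowerSemicontinuousOn_iff_preimage_Iic.1 hlsc (g y)
  exact (show ekelandSet D g δ y = D ∩ v from hDv) ▸ hD.inter hv

lemma exists_mem_ekelandSet_forall_le_add (hbdd : BddBelow (g '' D)) (hy : y ∈ D) (hε : 0 < ε) :
    ∃ y' ∈ ekelandSet D g δ y, ∀ z ∈ ekelandSet D g δ y, g y' ≤ g z + ε := by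
  have hne : (g '' ekelandSet D g δ y).Nonempty := ⟨_, mem_image_of_mem g (self_mem_ekelandSet hy)⟩
  have hbdd' : BddBelow (g '' ekelandSet D g δ y) := hbdd.mono (image_mono (sep_subset _ _))
  obtain ⟨_, ⟨y', hy', rfl⟩, hlt⟩ := exists_lt_of_csInf_lt hne (lt_add_of_pos_right _ hε)
  exact ⟨y', hy', fun z hz => by linarith [csInf_le hbdd' (mem_image_of_mem g hz)]⟩

lemma dist_le_of_mem_ekelandSet (hδ : 0 < δ) (h : ∀ z ∈ ekelandSet D g δ y, g y ≤ g z + ε)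
    {a b : X} (ha : a ∈ ekelandSet D g δ y) (hb : b ∈ ekelandSet D g δ y) :
    dist a b ≤ 2 * (ε / δ) := by
  have hball : ∀ z ∈ ekelandSet D g δ y, dist z y ≤ ε / δ := fun z hz => by
    rw [le_div_iff₀ hδ]
    linarith [h z hz, hz.2]
  linarith [dist_triangle_right a b y, hball a ha, hball b hb]

/-- Ekeland's variational principle. -/
theorem exists_mem_ekelandSet_forall_le_add_dist [CompleteSpace X] (hD : IsClosed D)
    (hg : LowerSemicontinuousOn g D) (hbdd : BddBelow (g '' D)) (hx : x ∈ D) (hδ : 0 < δ) :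
    ∃ y ∈ ekelandSet D g δ x, ∀ z ∈ D, g y ≤ g z + δ * dist z y := by
  choose! next hnext_mem hnext_le using fun (n : ℕ) (y : X) (hy : y ∈ D) =>
    exists_mem_ekelandSet_forall_le_add (δ := δ) hbdd hy (Nat.one_div_pos_of_nat (n := n))
  let ys : ℕ → X := fun n => Nat.rec x (fun n y => next n y) n
  have hys : ∀ n, ys n ∈ D := by
    intro n
    induction n with
    | zero => exact hx
    | succ n ih => exact (hnext_mem n _ ih).1
  let T : ℕ → Set X := fun n => ekelandSet D g δ (ys (n + 1))
  have hT_sub : ∀ n, T n ⊆ ekelandSet D g δ (ys n) := fun n =>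
    ekelandSet_subset_ekelandSet hδ.le (hnext_mem n _ (hys n))
  have hT_dist : ∀ n, ∀ a ∈ T n, ∀ b ∈ T n, dist a b ≤ 2 * (1 / (n + 1) / δ) :=
    fun n _ ha _ hb => dist_le_of_mem_ekelandSet hδ
      (fun z hz => hnext_le n _ (hys n) z (hT_sub n hz)) ha hb
  have hr : Tendsto (fun n : ℕ => 2 * (1 / (n + 1) / δ)) atTop (𝓝 0) := by
    simpa using (tendsto_one_div_add_atTop_nhds_zero_nat.div_const δ).const_mul 2
  obtain ⟨y, hy⟩ := exists_forall_mem_of_antitone_of_dist_le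
    (antitone_nat_of_succ_le fun n => hT_sub (n + 1)) (fun n => isClosed_ekelandSet hD hg _)
    (fun n => ⟨_, self_mem_ekelandSet (hys (n + 1))⟩) hT_dist hr
  refine ⟨y, hT_sub 0 (hy 0), fun z hz => ?_⟩
  by_contra! hlt
  have hzT : ∀ n, z ∈ T n := fun n =>
    ekelandSet_subset_ekelandSet hδ.le (hy n) ⟨hz, hlt.le⟩
  obtain rfl : z = y :=
    dist_le_zero.1 (ge_of_tendsto' hr fun n => hT_dist n z (hzT n) y (hy n))
  simp at hlt

end Ekeland

lemma EReal.add_coe_le_coe_iff {x : EReal} (hx : x ≠ ⊥) {r c : ℝ} :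
    x + r ≤ c ↔ x ≠ ⊤ ∧ x.toReal + r ≤ c := by
  induction x using EReal.rec <;> simp_all [← EReal.coe_add]

section ConvexEReal

variable {E : Type*} [AddCommGroup E] [Module ℝ E] {f : E → EReal}

theorem convexOn_toReal_of_le_mul_add_mul (hbot : ∀ x, f x ≠ ⊥)
    (hconv : ∀ x y : E, ∀ t : ℝ, 0 < t → t < 1 →
      f (t • x + (1 - t) • y) ≤ (t : EReal) * f x + ((1 - t : ℝ) : EReal) * f y) :
    ConvexOn ℝ {x | f x ≠ ⊤} fun x => (f x).toReal := by
  have key : ∀ x, f x ≠ ⊤ → ∀ y, f y ≠ ⊤ → ∀ a b : ℝ, 0 < a → 0 < b → a + b = 1 →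
      f (a • x + b • y) ≤ ((a * (f x).toReal + b * (f y).toReal : ℝ) : EReal) := by
    intro x hx y hy a b ha hb hab
    obtain rfl : b = 1 - a := by linarith
    simpa only [EReal.coe_add, EReal.coe_mul, EReal.coe_toReal hx (hbot x),
      EReal.coe_toReal hy (hbot y)] using hconv x y a ha (by linarith)
  refine convexOn_iff_forall_pos.2
    ⟨convex_iff_forall_pos.2 fun x hx y hy a b ha hb hab => ?_, fun x hx y hy a b ha hb hab => ?_⟩
  · exact ne_top_of_le_ne_top (EReal.coe_ne_top _) (key x hx y hy a b ha hb hab)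
  · exact (EReal.toReal_le_toReal (key x hx y hy a b ha hb hab) (hbot _)
      (EReal.coe_ne_top _)).trans_eq (EReal.toReal_coe _)

end ConvexEReal

section Subdifferential

variable {E : Type*} [NormedAddCommGroup E] [InnerProductSpace ℝ E] {f : E → EReal} {x z u : E}

lemma ne_top_of_mem_subdiff (hu : u ∈ subdiff f x) (hz : f z ≠ ⊤) : f x ≠ ⊤ := by
  intro hx
  have h := hu z
  rw [hx, EReal.top_add_coe, top_le_iff] at h
  exact hz h

lemma mem_subdiff_iff (hbot : ∀ x, f x ≠ ⊥) (hx : f x ≠ ⊤) :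
    u ∈ subdiff f x ↔ ∀ z, f z ≠ ⊤ → (f x).toReal + ⟪u, z - x⟫ ≤ (f z).toReal := by
  refine forall_congr' fun z => ?_
  by_cases hz : f z = ⊤
  · simp [hz]
  rw [← EReal.coe_toReal hx (hbot x), ← EReal.coe_toReal hz (hbot z), ← EReal.coe_add,
    EReal.coe_le_coe_iff, EReal.toReal_coe, EReal.toReal_coe]
  exact ⟨fun h _ => h, fun h => h (EReal.coe_ne_top _)⟩

end Subdifferential

section Proximal

variable {E : Type*} [NormedAddCommGroup E] [InnerProductSpace ℝ E]

lemma norm_midpoint_sub_sq (a b y : E) :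
    ‖(1 / 2 : ℝ) • a + (1 / 2 : ℝ) • b - y‖ ^ 2 =
      (‖a - y‖ ^ 2 + ‖b - y‖ ^ 2) / 2 - ‖a - b‖ ^ 2 / 4 := by
  have h1 : (1 / 2 : ℝ) • a + (1 / 2 : ℝ) • b - y = (1 / 2 : ℝ) • ((a - y) + (b - y)) := by
    module
  have h2 : a - b = (a - y) - (b - y) := by abel
  rw [h1, h2, norm_smul, mul_pow, Real.norm_eq_abs, abs_of_pos (by norm_num : (0 : ℝ) < 1 / 2)]
  linear_combination (1 / 4 : ℝ) * parallelogram_law_with_norm ℝ (a - y) (b - y)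

variable {C : Set E} {F : E → ℝ} {y p z : E} {t m : ℝ}

lemma ConvexOn.norm_sub_sq_le_of_forall_le (hF : ConvexOn ℝ C F) (ht : 0 < t)
    (hm : ∀ z ∈ C, m ≤ F z + ‖z - y‖ ^ 2 / (2 * t)) {a b : E} (ha : a ∈ C) (hb : b ∈ C) :
    ‖a - b‖ ^ 2 / (8 * t) ≤
      (F a + ‖a - y‖ ^ 2 / (2 * t) + (F b + ‖b - y‖ ^ 2 / (2 * t))) / 2 - m := by
  have hhalf : (1 / 2 : ℝ) + 1 / 2 = 1 := by norm_num
  have hmid := hm _ (hF.1 ha hb (by norm_num) (by norm_num) hhalf)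
  have hFmid := hF.2 ha hb (by norm_num) (by norm_num) hhalf
  rw [norm_midpoint_sub_sq] at hmid
  simp only [smul_eq_mul] at hFmid
  have e : ((‖a - y‖ ^ 2 + ‖b - y‖ ^ 2) / 2 - ‖a - b‖ ^ 2 / 4) / (2 * t) =
      (‖a - y‖ ^ 2 / (2 * t) + ‖b - y‖ ^ 2 / (2 * t)) / 2 - ‖a - b‖ ^ 2 / (8 * t) := by
    field_simp
    ring
  linarith

lemma ConvexOn.add_inner_inv_smul_sub_le (hF : ConvexOn ℝ C F) (ht : 0 < t) (hp : p ∈ C)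
    (hmin : ∀ z ∈ C, F p + ‖p - y‖ ^ 2 / (2 * t) ≤ F z + ‖z - y‖ ^ 2 / (2 * t)) (hz : z ∈ C) :
    F p + ⟪t⁻¹ • (y - p), z - p⟫ ≤ F z := by
  set X := ‖z - p‖ ^ 2 / (2 * t)
  have key : ∀ s ∈ Ioo (0 : ℝ) 1, F p + ⟪t⁻¹ • (y - p), z - p⟫ ≤ F z + s * X := by
    rintro s ⟨hs0, hs1⟩
    have hsum : s + (1 - s) = 1 := by ring
    have hw := hmin _ (hF.1 hz hp hs0.le (by linarith) hsum)
    have hFw := hF.2 hz hp hs0.le (by linarith) hsum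
    simp only [smul_eq_mul] at hFw
    have hexp : s • z + (1 - s) • p - y = (p - y) + s • (z - p) := by module
    have hinner : ⟪t⁻¹ • (y - p), z - p⟫ = -(⟪p - y, z - p⟫ / t) := by
      rw [real_inner_smul_left, ← neg_sub p y, inner_neg_left]
      ring
    rw [hexp, norm_add_sq_real, norm_smul, real_inner_smul_right, Real.norm_eq_abs,
      abs_of_pos hs0] at hw
    have e : (‖p - y‖ ^ 2 + 2 * (s * ⟪p - y, z - p⟫) + (s * ‖z - p‖) ^ 2) / (2 * t) =
        ‖p - y‖ ^ 2 / (2 * t) + s * (⟪p - y, z - p⟫ / t) + s * (s * X) := by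
      simp only [X]
      field_simp
    rw [hinner]
    nlinarith
  have hlim : Tendsto (fun s : ℝ => F z + s * X) (𝓝[>] 0) (𝓝 (F z)) := by
    have h : Tendsto (fun s : ℝ => F z + s * X) (𝓝 0) (𝓝 (F z + 0 * X)) :=
      ((continuous_const.add (continuous_id.mul continuous_const)).tendsto 0)
    simpa using h.mono_left nhdsWithin_le_nhds
  exact ge_of_tendsto hlim (by filter_upwards [Ioo_mem_nhdsGT one_pos] with s hs using key s hs)

end Proximal

section ProximalPoint

variable {E : Type*} [NormedAddCommGroup E] [InnerProductSpace ℝ E] [CompleteSpace E]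
  {f : E → EReal} {b t : ℝ}

theorem exists_forall_toReal_add_norm_sub_sq_le (hlsc : LowerSemicontinuous f)
    (hF : ConvexOn ℝ {x | f x ≠ ⊤} fun x => (f x).toReal) (hb : ∀ x, (b : EReal) ≤ f x)
    (hdom : ∃ x, f x ≠ ⊤) (y : E) (ht : 0 < t) :
    ∃ p, f p ≠ ⊤ ∧ ∀ z, f z ≠ ⊤ →
      (f p).toReal + ‖p - y‖ ^ 2 / (2 * t) ≤ (f z).toReal + ‖z - y‖ ^ 2 / (2 * t) := by
  set C := {x | f x ≠ ⊤}
  set Ψ : E → ℝ := fun z => (f z).toReal + ‖z - y‖ ^ 2 / (2 * t)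
  have hbdd : BddBelow (Ψ '' C) := ⟨b, forall_mem_image.2 fun z hz =>
    (EReal.toReal_le_toReal (hb z) (EReal.coe_ne_bot b) hz).trans
      (le_add_of_nonneg_right (by positivity))⟩
  set m := sInf (Ψ '' C)
  have hm : ∀ z ∈ C, m ≤ Ψ z := fun z hz => csInf_le hbdd (mem_image_of_mem Ψ hz)
  -- `ε n` is chosen so that, by strong convexity, `L n` has diameter at most `1 / (n + 1)`
  set ε : ℕ → ℝ := fun n => (1 / (n + 1)) ^ 2 / (8 * t)
  set L : ℕ → Set E := fun n =>
    {z | f z + ((‖z - y‖ ^ 2 / (2 * t) : ℝ) : EReal) ≤ ((m + ε n : ℝ) : EReal)}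
  have hL : ∀ n z, z ∈ L n ↔ z ∈ C ∧ Ψ z ≤ m + ε n := fun n z =>
    EReal.add_coe_le_coe_iff (ne_bot_of_le_ne_bot (EReal.coe_ne_bot b) (hb z))
  have hL_closed : ∀ n, IsClosed (L n) := fun n =>
    (hlsc.add' (continuous_coe_real_ereal.comp (by fun_prop)).lowerSemicontinuous
      fun z => EReal.continuousAt_add (Or.inr (EReal.coe_ne_bot _))
        (Or.inr (EReal.coe_ne_top _))).isClosed_preimage _
  have hL_anti : Antitone L := fun n k hnk z hz => by
    rw [hL] at hz ⊢
    refine ⟨hz.1, hz.2.trans (add_le_add_right ?_ m)⟩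
    change (1 / ((k : ℝ) + 1)) ^ 2 / (8 * t) ≤ (1 / ((n : ℝ) + 1)) ^ 2 / (8 * t)
    gcongr
  have hL_ne : ∀ n, (L n).Nonempty := fun n => by
    obtain ⟨_, ⟨z, hz, rfl⟩, hlt⟩ :=
      exists_lt_of_csInf_lt ((show C.Nonempty from hdom).image Ψ)
        (lt_add_of_pos_right m (by positivity : 0 < ε n))
    exact ⟨z, (hL n z).2 ⟨hz, hlt.le⟩⟩
  have hL_dist : ∀ n, ∀ a ∈ L n, ∀ b ∈ L n, dist a b ≤ 1 / (n + 1) := fun n a ha b hb => by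
    rw [hL] at ha hb
    have h := hF.norm_sub_sq_le_of_forall_le ht hm ha.1 hb.1
    rw [dist_eq_norm, ← pow_le_pow_iff_left₀ (norm_nonneg _) (by positivity) two_ne_zero,
      ← div_le_div_iff_of_pos_right (by positivity : 0 < 8 * t)]
    linarith [ha.2, hb.2]
  obtain ⟨p, hp⟩ := exists_forall_mem_of_antitone_of_dist_le hL_anti hL_closed hL_ne hL_dist
    tendsto_one_div_add_atTop_nhds_zero_nat
  have hε : Tendsto (fun n => m + ε n) atTop (𝓝 m) := by
    have h := ((tendsto_one_div_add_atTop_nhds_zero_nat.pow 2).div_const (8 * t)).const_add m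
    rwa [zero_pow two_ne_zero, zero_div, add_zero] at h
  refine ⟨p, ((hL 0 p).1 (hp 0)).1, fun z hz => ?_⟩
  exact (ge_of_tendsto' hε fun n => ((hL n p).1 (hp n)).2).trans (hm z hz)

theorem exists_inv_smul_sub_mem_subdiff (hlsc : LowerSemicontinuous f)
    (hF : ConvexOn ℝ {x | f x ≠ ⊤} fun x => (f x).toReal) (hb : ∀ x, (b : EReal) ≤ f x)
    (hdom : ∃ x, f x ≠ ⊤) (y : E) (ht : 0 < t) :
    ∃ p, t⁻¹ • (y - p) ∈ subdiff f p := by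
  obtain ⟨p, hp, hmin⟩ := exists_forall_toReal_add_norm_sub_sq_le hlsc hF hb hdom y ht
  exact ⟨p, (mem_subdiff_iff (fun x => ne_bot_of_le_ne_bot (EReal.coe_ne_bot b) (hb x)) hp).2
    fun z hz => hF.add_inner_inv_smul_sub_le ht hp hmin hz⟩

theorem exists_mem_subdiff_dist_eq_mul_norm (hlsc : LowerSemicontinuous f)
    (hF : ConvexOn ℝ {x | f x ≠ ⊤} fun x => (f x).toReal) (hb : ∀ x, (b : EReal) ≤ f x)
    {y : E} (hy : f y ≠ ⊤) (ht : 0 < t) :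
    ∃ p u, u ∈ subdiff f p ∧ dist p y = t * ‖u‖ ∧ (f p).toReal + t * ‖u‖ ^ 2 ≤ (f y).toReal := by
  obtain ⟨p, hp⟩ := exists_inv_smul_sub_mem_subdiff hlsc hF hb ⟨y, hy⟩ y ht
  set u := t⁻¹ • (y - p)
  have hyp : y - p = t • u := (smul_inv_smul₀ ht.ne' _).symm
  refine ⟨p, u, hp, by rw [dist_comm, dist_eq_norm, hyp, norm_smul, Real.norm_of_nonneg ht.le], ?_⟩
  have h := (mem_subdiff_iff (fun x => ne_bot_of_le_ne_bot (EReal.coe_ne_bot b) (hb x))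
    (ne_top_of_mem_subdiff hp hy)).1 hp y hy
  rwa [hyp, real_inner_smul_right, real_inner_self_eq_norm_sq] at h

end ProximalPoint

lemma ConcaveOn.deriv_mul_sub_le_sub {S : Set ℝ} {φ : ℝ → ℝ} {a b d : ℝ}
    (hφ : ConcaveOn ℝ S φ) (hb : b ∈ S) (ha : a ∈ S) (hba : b ≤ a) (hd : HasDerivAt φ d a) :
    d * (a - b) ≤ φ a - φ b := by
  rcases hba.eq_or_lt with rfl | hlt
  · simp
  have h := hφ.le_slope_of_hasDerivAt hb ha hlt hd
  rwa [slope_def_field, le_div_iff₀ (sub_pos.2 hlt)] at h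

lemma lowerSemicontinuousOn_comp_toReal {E : Type*} [TopologicalSpace E] {f : E → EReal}
    {D : Set E} {φ : ℝ → ℝ} (hlsc : LowerSemicontinuous f) (hf0 : ∀ x, 0 ≤ f x)
    (hD : ∀ x ∈ D, f x ≠ ⊤) (hφ : ContinuousOn φ (Ici 0)) (hφmono : MonotoneOn φ (Ici 0)) :
    LowerSemicontinuousOn (fun x => φ (f x).toReal) D := by
  have hF : LowerSemicontinuousOn (fun x => (f x).toReal) D := fun x _ v hv => by
    have hvx : (v : EReal) < f x := (EReal.coe_lt_coe_iff.2 hv).trans_le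
      (EReal.coe_toReal_le (ne_bot_of_le_ne_bot EReal.zero_ne_bot (hf0 x)))
    filter_upwards [nhdsWithin_le_nhds (hlsc x v hvx), self_mem_nhdsWithin] with w hw hwD
    exact EReal.coe_lt_coe_iff.1 (hw.trans_le (EReal.le_coe_toReal (hD w hwD)))
  -- composing with a lsc function needs a monotone continuous function on all of `ℝ`
  set ψ : ℝ → ℝ := fun s => φ (max s 0)
  have hcont : Continuous ψ :=
    hφ.comp_continuous (continuous_id.max continuous_const) fun s => le_max_right s 0
  have hmono : Monotone ψ := fun s s' h =>
    hφmono (le_max_right s 0) (le_max_right s' 0) (max_le_max h le_rfl)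
  have hψ : ∀ x, ψ (f x).toReal = φ (f x).toReal := fun x => by
    simp [ψ, EReal.toReal_nonneg (hf0 x)]
  intro x hx v hv
  filter_upwards [hcont.continuousAt.comp_lowerSemicontinuousWithinAt (hF x hx) hmono v
    ((hψ x).trans_gt hv)] with w hw
  exact (hψ w).symm.trans_gt hw

lemma mul_le_and_sq_mul_sub_le {a b k t θ N : ℝ} (hk : 0 < k) (ht : 0 < t) (hθ : 0 ≤ θ)
    (hN : 0 ≤ N) (hstep : b + t * N ^ 2 ≤ a) (hgap : k * (a - b) ≤ θ * (t * N)) :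
    k * N ≤ θ ∧ k ^ 2 * (a - b) ≤ θ ^ 2 * t := by
  have hkN : k * N ≤ θ := by
    rcases hN.eq_or_lt with rfl | hN
    · simpa using hθ
    have h : t * N * (k * N) ≤ t * N * θ := by
      nlinarith [mul_le_mul_of_nonneg_left hstep hk.le]
    exact le_of_mul_le_mul_left h (by positivity)
  refine ⟨hkN, ?_⟩
  calc k ^ 2 * (a - b) = k * (k * (a - b)) := by ring
    _ ≤ k * (θ * (t * N)) := mul_le_mul_of_nonneg_left hgap hk.le
    _ = θ * t * (k * N) := by ring
    _ ≤ θ * t * θ := by gcongr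
    _ = θ ^ 2 * t := by ring

section Lojasiewicz

variable {E : Type*} [NormedAddCommGroup E] [InnerProductSpace ℝ E] {f : E → EReal}
  {φ φ' : ℝ → ℝ}

theorem exists_le_and_comp_add_dist_lt [CompleteSpace E] (hlsc : LowerSemicontinuous f)
    (hF : ConvexOn ℝ {x | f x ≠ ⊤} fun x => (f x).toReal) (hf0 : ∀ x, 0 ≤ f x)
    (hφderiv : ∀ s ∈ Ioi (0 : ℝ), HasDerivAt φ (φ' s) s) (hφ'cont : ContinuousOn φ' (Ioi 0))
    (hφconc : ConcaveOn ℝ (Ici 0) φ) (hφ'pos : ∀ s ∈ Ioi (0 : ℝ), 0 < φ' s)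
    (hLoj : ∀ x, 0 < f x → ∀ u ∈ subdiff f x, 1 ≤ φ' (f x).toReal * ‖u‖)
    {y : E} (hy0 : 0 < f y) (hy : f y ≠ ⊤) {θ : ℝ} (hθ0 : 0 < θ) (hθ1 : θ < 1) :
    ∃ z, f z ≤ f y ∧ φ (f z).toReal + θ * dist z y < φ (f y).toReal := by
  have hbot : ∀ x, f x ≠ ⊥ := fun x => ne_bot_of_le_ne_bot EReal.zero_ne_bot (hf0 x)
  set a := (f y).toReal
  have ha : 0 < a := EReal.toReal_pos hy0 hy
  set k := φ' a
  have hk : 0 < k := hφ'pos a ha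
  obtain ⟨δ, hδ, hδa, hφ'lt⟩ : ∃ δ > 0, δ ≤ a ∧ ∀ b, dist b a < δ → φ' b < k / θ := by
    have hlt : k < k / θ := (lt_div_iff₀ hθ0).2 (by nlinarith)
    obtain ⟨δ, hδ, h⟩ := Metric.eventually_nhds_iff.1
      ((hφ'cont.continuousAt (Ioi_mem_nhds ha)).eventually (gt_mem_nhds hlt))
    exact ⟨min δ a, lt_min hδ ha, min_le_right _ _, fun b hb => h (hb.trans_le (min_le_left _ _))⟩
  -- `t` is small enough that the proximal step from `y` lowers `f` by less than `δ`
  set t := δ * k ^ 2 / (2 * θ ^ 2)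
  have ht : 0 < t := by positivity
  obtain ⟨p, u, hu, hdist, hstep⟩ :=
    exists_mem_subdiff_dist_eq_mul_norm hlsc hF (b := 0) (by simpa using hf0) hy ht
  have hp : f p ≠ ⊤ := ne_top_of_mem_subdiff hu hy
  set b := (f p).toReal
  have hba : b ≤ a := by nlinarith
  refine ⟨p, ?_, ?_⟩
  · rw [← EReal.coe_toReal hp (hbot p), ← EReal.coe_toReal hy (hbot y)]
    exact EReal.coe_le_coe_iff.2 hba
  by_contra! hek
  have htan : k * (a - b) ≤ φ a - φ b :=
    hφconc.deriv_mul_sub_le_sub (EReal.toReal_nonneg (hf0 p)) ha.le hba (hφderiv a ha)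
  obtain ⟨hku, hgap⟩ := mul_le_and_sq_mul_sub_le hk ht hθ0.le (norm_nonneg u) hstep
    (by rw [← hdist]; linarith)
  have ht_eq : θ ^ 2 * t = k ^ 2 * (δ / 2) := by
    simp only [t]
    field_simp
  have hab : a - b ≤ δ / 2 := le_of_mul_le_mul_left (hgap.trans ht_eq.le) (by positivity)
  have hb : 0 < b := by linarith
  have hLp := hLoj p (EReal.coe_toReal hp (hbot p) ▸ EReal.coe_pos.2 hb) u hu
  have hφ'b : φ' b * θ < k := (lt_div_iff₀ hθ0).1 <| hφ'lt b <| by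
    rw [Real.dist_eq, abs_sub_comm, abs_of_nonneg (by linarith)]
    linarith
  rcases (norm_nonneg u).eq_or_lt with hu0 | hu0
  · rw [← hu0, mul_zero] at hLp
    linarith
  · nlinarith [mul_lt_mul_of_pos_right hφ'b hu0]

theorem infDist_argminSet_le_of_lojasiewicz [CompleteSpace E] (hlsc : LowerSemicontinuous f)
    (hF : ConvexOn ℝ {x | f x ≠ ⊤} fun x => (f x).toReal) (hf0 : ∀ x, 0 ≤ f x)
    (hφcont : ContinuousOn φ (Ici 0)) (hφderiv : ∀ s ∈ Ioi (0 : ℝ), HasDerivAt φ (φ' s) s)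
    (hφ'cont : ContinuousOn φ' (Ioi 0)) (hφconc : ConcaveOn ℝ (Ici 0) φ) (hφ0 : φ 0 = 0)
    (hφ'pos : ∀ s ∈ Ioi (0 : ℝ), 0 < φ' s)
    (hLoj : ∀ x, 0 < f x → ∀ u ∈ subdiff f x, 1 ≤ φ' (f x).toReal * ‖u‖)
    {x : E} (hx0 : 0 < f x) (hx : f x ≠ ⊤) :
    infDist x (argminSet f) ≤ φ (f x).toReal := by
  have hφmono : MonotoneOn φ (Ici 0) :=
    monotoneOn_of_hasDerivWithinAt_nonneg (convex_Ici 0) hφcont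
      (fun s hs => by rw [interior_Ici] at hs ⊢; exact (hφderiv s hs).hasDerivWithinAt)
      (fun s hs => by rw [interior_Ici] at hs; exact (hφ'pos s hs).le)
  have hφnonneg : ∀ s, 0 ≤ s → 0 ≤ φ s := fun s hs => hφ0 ▸ hφmono self_mem_Ici hs hs
  set r := (f x).toReal
  set D := {w | f w ≤ (r : EReal)}
  have hD : ∀ w ∈ D, f w ≠ ⊤ := fun w hw => ne_top_of_le_ne_top (EReal.coe_ne_top r) hw
  have hxD : x ∈ D := (EReal.coe_toReal hx (ne_bot_of_le_ne_bot EReal.zero_ne_bot hx0.le)).ge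
  have hbdd : BddBelow ((fun w => φ (f w).toReal) '' D) :=
    ⟨0, forall_mem_image.2 fun w _ => hφnonneg _ (EReal.toReal_nonneg (hf0 w))⟩
  refine (le_iff_forall_one_lt_le_mul₀ (hφnonneg r (EReal.toReal_nonneg hx0.le))).2
    fun ε hε => ?_
  have hε0 : 0 < ε := zero_lt_one.trans hε
  obtain ⟨y, ⟨hyD, hyx⟩, hy⟩ := exists_mem_ekelandSet_forall_le_add_dist
    (hlsc.isClosed_preimage _) (lowerSemicontinuousOn_comp_toReal hlsc hf0 hD hφcont hφmono)
    hbdd hxD (inv_pos.2 hε0)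
  have hy0 : f y = 0 := by
    by_contra hne
    obtain ⟨z, hzy, hlt⟩ := exists_le_and_comp_add_dist_lt hlsc hF hf0 hφderiv hφ'cont hφconc
      hφ'pos hLoj ((hf0 y).lt_of_ne' hne) (hD y hyD) (inv_pos.2 hε0) (inv_lt_one_of_one_lt₀ hε)
    exact (hy z (hzy.trans hyD)).not_gt hlt
  simp only [hy0, EReal.toReal_zero] at hyx
  rw [hφ0, zero_add, dist_comm, inv_mul_le_iff₀ hε0, mul_comm] at hyx
  exact (infDist_le_dist_of_mem fun w => hy0 ▸ hf0 w).trans hyx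

lemma toReal_le_norm_mul_infDist_argminSet (hf0 : ∀ x, 0 ≤ f x) {z₀ : E} (hz₀ : f z₀ = 0)
    {x u : E} (hu : u ∈ subdiff f x) : (f x).toReal ≤ ‖u‖ * infDist x (argminSet f) := by
  have hx : f x ≠ ⊤ := ne_top_of_mem_subdiff hu (hz₀ ▸ EReal.zero_ne_top)
  have hS : ∀ z ∈ argminSet f, f z = 0 := fun z hz => le_antisymm (hz₀ ▸ hz z₀) (hf0 z)
  have key : ∀ z ∈ argminSet f, (f x).toReal ≤ ‖u‖ * dist x z := fun z hz => by
    have h := (mem_subdiff_iff (fun x => ne_bot_of_le_ne_bot EReal.zero_ne_bot (hf0 x)) hx).1 hu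
      z (by rw [hS z hz]; exact EReal.zero_ne_top)
    rw [hS z hz, EReal.toReal_zero, ← neg_sub x z, inner_neg_right] at h
    rw [dist_eq_norm]
    linarith [real_inner_le_norm u (x - z)]
  have hz₀S : z₀ ∈ argminSet f := fun w => hz₀ ▸ hf0 w
  rcases (norm_nonneg u).eq_or_lt with hu0 | hu0
  · simpa [← hu0] using key z₀ hz₀S
  · rw [← div_le_iff₀' hu0]
    exact (le_infDist ⟨z₀, hz₀S⟩).2 fun z hz => (div_le_iff₀' hu0).2 (key z hz)

theorem le_deriv_mul_norm_of_infDist_le {c : ℝ} (hf0 : ∀ x, 0 ≤ f x) {z₀ : E} (hz₀ : f z₀ = 0)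
    (hφ'pos : ∀ s ∈ Ioi (0 : ℝ), 0 < φ' s) (hmod : ∀ s ∈ Ioi (0 : ℝ), c * φ s ≤ s * φ' s)
    (herr : ∀ x, 0 < f x → f x ≠ ⊤ → infDist x (argminSet f) ≤ φ (f x).toReal)
    {x u : E} (hx0 : 0 < f x) (hu : u ∈ subdiff f x) : c ≤ φ' (f x).toReal * ‖u‖ := by
  have hx : f x ≠ ⊤ := ne_top_of_mem_subdiff hu (hz₀ ▸ EReal.zero_ne_top)
  set s := (f x).toReal
  have hs : 0 < s := EReal.toReal_pos hx0 hx
  have hsφ : s ≤ ‖u‖ * φ s := (toReal_le_norm_mul_infDist_argminSet hf0 hz₀ hu).trans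
    (mul_le_mul_of_nonneg_left (herr x hx0 hx) (norm_nonneg u))
  have hφs : 0 < φ s := pos_of_mul_pos_right (hs.trans_le hsφ) (norm_nonneg u)
  refine le_of_mul_le_mul_right ?_ hφs
  calc c * φ s ≤ s * φ' s := hmod s hs
    _ ≤ ‖u‖ * φ s * φ' s := mul_le_mul_of_nonneg_right hsφ (hφ'pos s hs).le
    _ = φ' s * ‖u‖ * φ s := by ring

end Lojasiewicz

theorem stmt2_general (f : H → EReal)
    (hlsc : LowerSemicontinuous f)
    (hconv : ∀ x y : H, ∀ t : ℝ, 0 < t → t < 1 →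
      f (t • x + (1 - t) • y) ≤ (t : EReal) * f x + ((1 - t : ℝ) : EReal) * f y)
    (hmin : ∃ z, z ∈ argminSet f ∧ f z = 0)
    (c : ℝ)
    (φ φ' : ℝ → ℝ)
    (hφcont : ContinuousOn φ (Ici 0))
    (hφderiv : ∀ s ∈ Ioi (0 : ℝ), HasDerivAt φ (φ' s) s)
    (hφ'cont : ContinuousOn φ' (Ioi 0))
    (hφconc : ConcaveOn ℝ (Ici 0) φ)
    (hφ0 : φ 0 = 0)
    (hφ'pos : ∀ s ∈ Ioi (0 : ℝ), 0 < φ' s) :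
    ((∀ x, 0 < f x → ∀ u ∈ subdiff f x, 1 ≤ φ' ((f x).toReal) * ‖u‖) →
      ∀ x, 0 < f x → f x ≠ ⊤ → Metric.infDist x (argminSet f) ≤ φ ((f x).toReal)) ∧
    ((∀ s ∈ Ioi (0 : ℝ), c * φ s ≤ s * φ' s) →
      (∀ x, 0 < f x → f x ≠ ⊤ → Metric.infDist x (argminSet f) ≤ φ ((f x).toReal)) →
      ∀ x, 0 < f x → ∀ u ∈ subdiff f x, c ≤ φ' ((f x).toReal) * ‖u‖) := by
  obtain ⟨z₀, hz₀min, hz₀⟩ := hmin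
  have hf0 : ∀ x, 0 ≤ f x := fun x => hz₀ ▸ hz₀min x
  have hF := convexOn_toReal_of_le_mul_add_mul
    (fun x => ne_bot_of_le_ne_bot EReal.zero_ne_bot (hf0 x)) hconv
  exact ⟨fun hLoj x hx0 hx => infDist_argminSet_le_of_lojasiewicz hlsc hF hf0 hφcont hφderiv
      hφ'cont hφconc hφ0 hφ'pos hLoj hx0 hx,
    fun hmod herr x hx0 u hu => le_deriv_mul_norm_of_infDist_le hf0 hz₀ hφ'pos hmod herr hx0 hu⟩

/-- **Corollary 3.3** (global characterization of Łojasiewicz inequalities for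
convex functions): for a proper lower-semicontinuous convex `f` with `min f = 0`
and `φ ∈ 𝒦(0,∞)`, `c > 0`:
(i) if `φ'(f(x))·‖∂⁰f(x)‖ ≥ 1` whenever `f(x) > 0`, then
`dist(x, argmin f) ≤ φ(f(x))` whenever `f(x) > 0`;
(ii) conversely, if `s·φ'(s) ≥ c·φ(s)` for all `s > 0` and
`φ(f(x)) ≥ dist(x, argmin f)` whenever `f(x) > 0`, then
`φ'(f(x))·‖∂⁰f(x)‖ ≥ c` whenever `f(x) > 0`.
The quantity `φ'(f(x))·‖∂⁰f(x)‖ ≥ c` (with `‖∂⁰f(x)‖ = dist(0,∂f(x)) ∈ [0,∞]`) is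
expressed equivalently as `φ'(f(x))·‖u‖ ≥ c` for every `u ∈ ∂f(x)`. -/
theorem stmt2 (f : H → EReal)
    (hbot : ∀ x, f x ≠ ⊥) (htop : ∃ x, f x ≠ ⊤)
    (hlsc : LowerSemicontinuous f)
    (hconv : ∀ x y : H, ∀ t : ℝ, 0 < t → t < 1 →
      f (t • x + (1 - t) • y) ≤ (t : EReal) * f x + ((1 - t : ℝ) : EReal) * f y)
    (hmin : ∃ z, z ∈ argminSet f ∧ f z = 0)
    (c : ℝ) (hc : 0 < c)
    (φ φ' : ℝ → ℝ)
    (hφcont : ContinuousOn φ (Ici 0))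
    (hφderiv : ∀ s ∈ Ioi (0 : ℝ), HasDerivAt φ (φ' s) s)
    (hφ'cont : ContinuousOn φ' (Ioi 0))
    (hφconc : ConcaveOn ℝ (Ici 0) φ)
    (hφ0 : φ 0 = 0)
    (hφ'pos : ∀ s ∈ Ioi (0 : ℝ), 0 < φ' s) :
    ((∀ x, 0 < f x → ∀ u ∈ subdiff f x, 1 ≤ φ' ((f x).toReal) * ‖u‖) →
      ∀ x, 0 < f x → f x ≠ ⊤ → Metric.infDist x (argminSet f) ≤ φ ((f x).toReal)) ∧
    ((∀ s ∈ Ioi (0 : ℝ), c * φ s ≤ s * φ' s) →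
      (∀ x, 0 < f x → f x ≠ ⊤ → Metric.infDist x (argminSet f) ≤ φ ((f x).toReal)) →
      ∀ x, 0 < f x → ∀ u ∈ subdiff f x, c ≤ φ' ((f x).toReal) * ‖u‖) :=
  stmt2_general f hlsc hconv hmin c φ φ' hφcont hφderiv hφ'cont hφconc hφ0 hφ'pos
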